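/- arXiv:2208.04541 — 3 statements merged into one kernel-verified Lean document; each statement's English description precedes it below -/
import Mathlib

section
/- Let N_c be a positive integer, let τ_1, …, τ_K be integers with τ_a ≢ τ_b (mod N_c) for all a ≠ b, let g_1, …, g_K ∈ ℂ and P_1, …, P_K ≥ 0, and let ḡ ∈ ℂ^K satisfy |ḡ_k|² ≤ |g_k|² P_k for every k. With g̃_n = Σ_{k=1}^K ḡ_k exp(−2πi τ_k n / N_c), the average sub-carrier rate satisfies (1/N_c) Σ_{n=1}^{N_c} log₂(1 + |g̃_n|²) ≤ log₂(1 + Σ_{k=1}^K |g_k|² P_k). -/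
/-!
The sub-carrier gains `g̃ₙ = ∑ₖ ḡₖ ζₖⁿ` are built from pairwise distinct `N_c`-th roots of unity
`ζₖ = exp(-2πi τₖ / N_c)`, so the characters `n ↦ ζₖⁿ` are orthogonal over a full period and
Parseval's identity gives `(1/N_c) ∑ₙ |g̃ₙ|² = ∑ₖ |ḡₖ|²`. Jensen's inequality for the concave
function `x ↦ log₂ (1 + x)` bounds the average rate by `log₂ (1 + ∑ₖ |ḡₖ|²)`, and the power
constraint `|ḡₖ|² ≤ |gₖ|² Pₖ` finishes the argument.
-/

open Finset Complex ComplexConjugate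

theorem concaveOn_logb_one_add {b : ℝ} (hb : 1 ≤ b) :
    ConcaveOn ℝ (Set.Ici 0) (fun x ↦ Real.logb b (1 + x)) := by
  have hlog : ConcaveOn ℝ ((fun x ↦ 1 + x) ⁻¹' Set.Ioi 0) (fun x ↦ Real.log (1 + x)) :=
    strictConcaveOn_log_Ioi.concaveOn.translate_right 1
  have hsub : Set.Ici (0 : ℝ) ⊆ (fun x ↦ 1 + x) ⁻¹' Set.Ioi 0 := fun x (hx : 0 ≤ x) ↦
    show 0 < 1 + x by linarith
  exact ((hlog.smul (inv_nonneg.2 (Real.log_nonneg hb))).subset hsub (convex_Ici 0)).congr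
    fun x _ ↦ by simp [Real.logb, div_eq_inv_mul]

theorem ConcaveOn.mean_le_map_mean {ι : Type*} {s : Set ℝ} {f : ℝ → ℝ} (hf : ConcaveOn ℝ s f)
    {t : Finset ι} (ht : t.Nonempty) {x : ι → ℝ} (hx : ∀ i ∈ t, x i ∈ s) :
    (#t : ℝ)⁻¹ * ∑ i ∈ t, f (x i) ≤ f ((#t : ℝ)⁻¹ * ∑ i ∈ t, x i) := by
  have hw : ∑ _i ∈ t, (#t : ℝ)⁻¹ = 1 := by
    rw [sum_const, nsmul_eq_mul, mul_inv_cancel₀ (by exact_mod_cast ht.card_ne_zero)]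
  simpa only [smul_eq_mul, mul_sum] using
    hf.le_map_sum (fun _ _ ↦ inv_nonneg.2 (Nat.cast_nonneg _)) hw hx

theorem sum_Icc_pow_of_pow_eq_one {R : Type*} [CommRing R] [IsDomain R] [DecidableEq R]
    {ζ : R} {N : ℕ} (h : ζ ^ N = 1) :
    ∑ n ∈ Icc 1 N, ζ ^ n = if ζ = 1 then (N : R) else 0 := by
  split_ifs with hζ
  · simp [hζ]
  have hgeom : ∑ n ∈ range N, ζ ^ n = 0 := by
    have := geom_sum_mul ζ N
    rw [h, sub_self] at this
    exact (mul_eq_zero.1 this).resolve_right (sub_ne_zero.2 hζ)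
  rw [← Ico_add_one_right_eq_Icc, sum_Ico_eq_sum_range, Nat.add_sub_cancel]
  simp_rw [pow_add, pow_one, ← mul_sum, hgeom, mul_zero]

theorem sum_Icc_norm_sq_sum_mul_pow {ι : Type*} [Fintype ι] [DecidableEq ι] {N : ℕ} (hN : N ≠ 0)
    {ζ : ι → ℂ} (hζN : ∀ k, ζ k ^ N = 1) (hζ : Function.Injective ζ) (a : ι → ℂ) :
    ∑ n ∈ Icc 1 N, ‖∑ k, a k * ζ k ^ n‖ ^ 2 = N * ∑ k, ‖a k‖ ^ 2 := by
  have hconj : ∀ k, conj (ζ k) = (ζ k)⁻¹ := fun k ↦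
    (inv_eq_conj (norm_eq_one_of_pow_eq_one (hζN k) hN)).symm
  have hne : ∀ k, ζ k ≠ 0 := fun k h ↦ by simpa [h, zero_pow hN] using hζN k
  have horth : ∀ k l, ∑ n ∈ Icc 1 N, (ζ k * (ζ l)⁻¹) ^ n = if k = l then (N : ℂ) else 0 := by
    intro k l
    rw [sum_Icc_pow_of_pow_eq_one (by rw [mul_pow, inv_pow, hζN, hζN, inv_one, one_mul])]
    simp only [mul_inv_eq_one₀ (hne l), hζ.eq_iff]
  apply ofReal_injective
  push_cast [← mul_conj']
  calc ∑ n ∈ Icc 1 N, (∑ k, a k * ζ k ^ n) * conj (∑ l, a l * ζ l ^ n)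
      = ∑ k, ∑ l, a k * conj (a l) * ∑ n ∈ Icc 1 N, (ζ k * (ζ l)⁻¹) ^ n := by
        simp_rw [map_sum, map_mul, map_pow, hconj, sum_mul_sum, mul_sum]
        rw [sum_comm]
        refine sum_congr rfl fun k _ ↦ ?_
        rw [sum_comm]
        refine sum_congr rfl fun l _ ↦ sum_congr rfl fun n _ ↦ ?_
        ring
    _ = N * ∑ k, a k * conj (a k) := by
        simp_rw [horth, mul_ite, mul_zero, sum_ite_eq, mem_univ, if_true, mul_sum, mul_comm]

theorem IsPrimitiveRoot.zpow_eq_zpow_iff_dvd {G : Type*} [CommGroupWithZero G] {ζ : G} {k : ℕ}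
    (h : IsPrimitiveRoot ζ k) (hk : k ≠ 0) (i j : ℤ) : ζ ^ i = ζ ^ j ↔ (k : ℤ) ∣ i - j := by
  rw [← h.zpow_eq_one_iff_dvd, zpow_sub₀ (h.ne_zero hk),
    div_eq_one_iff_eq (zpow_ne_zero _ (h.ne_zero hk))]

theorem exp_neg_two_pi_I_mul_div_eq_pow (N : ℕ) (m : ℤ) (n : ℕ) :
    exp (-(2 * Real.pi * I * m * n) / N) = (exp (2 * Real.pi * I / N) ^ (-m)) ^ n := by
  rw [← zpow_natCast, ← zpow_mul, ← exp_int_mul]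
  congr 1
  push_cast
  ring

theorem stmt_6_general (K Nc : ℕ) (hNc : 0 < Nc) (τ : Fin K → ℤ)
    (hτ : ∀ a b : Fin K, a ≠ b → ¬ ((Nc : ℤ) ∣ (τ a - τ b)))
    (g : Fin K → ℂ) (P : Fin K → ℝ)
    (gbar : Fin K → ℂ)
    (hfeas : ∀ k, ‖gbar k‖ ^ 2 ≤ ‖g k‖ ^ 2 * P k) :
    (1 / (Nc : ℝ)) * ∑ n ∈ Finset.Icc 1 Nc,
        Real.logb 2 (1 + ‖∑ k : Fin K,
          gbar k * Complex.exp (-(2 * Real.pi * Complex.I * (τ k : ℂ) * (n : ℂ)) / (Nc : ℂ))‖ ^ 2)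
      ≤ Real.logb 2 (1 + ∑ k : Fin K, ‖g k‖ ^ 2 * P k) := by
  have hμ := isPrimitiveRoot_exp Nc hNc.ne'
  set ζ : Fin K → ℂ := fun k ↦ exp (2 * Real.pi * I / Nc) ^ (-τ k)
  have hζN : ∀ k, ζ k ^ Nc = 1 := fun k ↦ by
    rw [← zpow_natCast, ← zpow_mul, mul_comm (-τ k), zpow_mul, hμ.zpow_eq_one, one_zpow]
  have hζ : Function.Injective ζ := fun a b hab ↦ by
    by_contra hne
    have hdvd := (hμ.zpow_eq_zpow_iff_dvd hNc.ne' _ _).1 hab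
    rw [neg_sub_neg] at hdvd
    exact hτ b a (Ne.symm hne) hdvd
  have hparseval : ∑ n ∈ Icc 1 Nc, ‖∑ k, gbar k *
      exp (-(2 * Real.pi * I * (τ k : ℂ) * (n : ℂ)) / (Nc : ℂ))‖ ^ 2 = Nc * ∑ k, ‖gbar k‖ ^ 2 := by
    simp_rw [exp_neg_two_pi_I_mul_div_eq_pow]
    exact sum_Icc_norm_sq_sum_mul_pow hNc.ne' hζN hζ gbar
  calc _ ≤ Real.logb 2 (1 + 1 / (Nc : ℝ) * ∑ n ∈ Icc 1 Nc, ‖∑ k, gbar k *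
          exp (-(2 * Real.pi * I * (τ k : ℂ) * (n : ℂ)) / (Nc : ℂ))‖ ^ 2) := by
        simpa [Nat.card_Icc] using (concaveOn_logb_one_add one_le_two).mean_le_map_mean
          (nonempty_Icc.2 (Nat.one_le_of_lt hNc)) (fun n _ ↦ Set.mem_Ici.2 (sq_nonneg _))
    _ = Real.logb 2 (1 + ∑ k, ‖gbar k‖ ^ 2) := by
        rw [hparseval, one_div, inv_mul_cancel_left₀ (by exact_mod_cast hNc.ne')]
    _ ≤ Real.logb 2 (1 + ∑ k, ‖g k‖ ^ 2 * P k) :=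
        Real.logb_le_logb_of_le one_lt_two (by positivity) (by gcongr with k; exact hfeas k)

/-- The IeCRS second-phase rate with signals arriving in different taps is upper
bounded by the single-tap benchmark rate. -/
theorem stmt_6 (K Nc : ℕ) (hNc : 0 < Nc) (τ : Fin K → ℤ)
    (hτ : ∀ a b : Fin K, a ≠ b → ¬ ((Nc : ℤ) ∣ (τ a - τ b)))
    (g : Fin K → ℂ) (P : Fin K → ℝ) (hP : ∀ k, 0 ≤ P k)
    (gbar : Fin K → ℂ)
    (hfeas : ∀ k, ‖gbar k‖ ^ 2 ≤ ‖g k‖ ^ 2 * P k) :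
    (1 / (Nc : ℝ)) * ∑ n ∈ Finset.Icc 1 Nc,
        Real.logb 2 (1 + ‖∑ k : Fin K,
          gbar k * Complex.exp (-(2 * Real.pi * Complex.I * (τ k : ℂ) * (n : ℂ)) / (Nc : ℂ))‖ ^ 2)
      ≤ Real.logb 2 (1 + ∑ k : Fin K, ‖g k‖ ^ 2 * P k) :=
  stmt_6_general K Nc hNc τ hτ g P gbar hfeas
end

section
/- Let T be a positive real number and c ∈ ℂ with |c|² < T. Then the infimum over w ∈ ℂ and μ > 0 of ξ(w, μ) = μ (|w|² T − 2 Re(w c) + 1) − ln(μ) equals 1 + ln((T − |c|²)/T) = 1 − ln(2) · log₂( T/(T − |c|²) ), and it is attained at w = conj(c)/T and μ = T/(T − |c|²). -/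
/-!
Completing the square, the mean-squared error `ε(w) = |w|²T − 2 Re(wc) + 1` equals
`T |w − c̄/T|² + (T − |c|²)/T`, so it is minimised by the MMSE equaliser `w = c̄/T` with value
`(T − |c|²)/T`. For fixed `ε > 0`, `log x ≤ x − 1` at `x = με` gives `με − ln μ ≥ 1 + ln ε`,
with equality at `μ = ε⁻¹`. Since `ln` is monotone, the two minimisations combine.
-/

noncomputable def mse (T : ℝ) (c w : ℂ) : ℝ := ‖w‖ ^ 2 * T - 2 * (w * c).re + 1

theorem mse_eq_mul_norm_sub_sq_add {T : ℝ} (hT : T ≠ 0) (c w : ℂ) :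
    mse T c w = T * ‖w - starRingEnd ℂ c / T‖ ^ 2 + (T - ‖c‖ ^ 2) / T := by
  simp only [mse, Complex.sq_norm, Complex.normSq_apply, Complex.sub_re, Complex.sub_im,
    Complex.div_ofReal_re, Complex.div_ofReal_im, Complex.conj_re, Complex.conj_im,
    Complex.mul_re]
  field_simp
  ring

theorem Real.one_add_log_le_mul_sub_log {ε μ : ℝ} (hε : 0 < ε) (hμ : 0 < μ) :
    1 + Real.log ε ≤ μ * ε - Real.log μ := by
  have h := Real.log_le_sub_one_of_pos (mul_pos hμ hε)
  rw [Real.log_mul hμ.ne' hε.ne'] at h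
  linarith

theorem Real.inv_mul_sub_log_inv {ε : ℝ} (hε : ε ≠ 0) :
    ε⁻¹ * ε - Real.log ε⁻¹ = 1 + Real.log ε := by
  rw [inv_mul_cancel₀ hε, Real.log_inv, sub_neg_eq_add]

/-- Rate–WMMSE relationship: the infimum over `w ∈ ℂ`, `μ > 0` of
`ξ(w,μ) = μ(|w|²T − 2Re(wc) + 1) − ln μ` equals
`1 + ln((T − |c|²)/T) = 1 − ln 2 · log₂(T/(T − |c|²))`, attained at
`w = conj(c)/T`, `μ = T/(T − |c|²)`. -/
theorem stmt_10 (T : ℝ) (hT : 0 < T) (c : ℂ) (hc : ‖c‖ ^ 2 < T)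
    (ξ : ℂ → ℝ → ℝ)
    (hξ : ∀ (w : ℂ) (μ : ℝ),
      ξ w μ = μ * (‖w‖ ^ 2 * T - 2 * (w * c).re + 1) - Real.log μ) :
    (∀ (w : ℂ) (μ : ℝ), 0 < μ →
        1 + Real.log ((T - ‖c‖ ^ 2) / T) ≤ ξ w μ) ∧
    ξ ((starRingEnd ℂ) c / (T : ℂ)) (T / (T - ‖c‖ ^ 2))
        = 1 + Real.log ((T - ‖c‖ ^ 2) / T) ∧
    1 + Real.log ((T - ‖c‖ ^ 2) / T)
        = 1 - Real.log 2 * Real.logb 2 (T / (T - ‖c‖ ^ 2)) := by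
  have hε_min : 0 < (T - ‖c‖ ^ 2) / T := div_pos (sub_pos.mpr hc) hT
  have hξ_mse (w : ℂ) (μ : ℝ) : ξ w μ = μ * mse T c w - Real.log μ := hξ w μ
  refine ⟨fun w μ hμ => ?_, ?_, ?_⟩
  · have hmse_ge : (T - ‖c‖ ^ 2) / T ≤ mse T c w := by
      rw [mse_eq_mul_norm_sub_sq_add hT.ne']
      exact le_add_of_nonneg_left (by positivity)
    calc 1 + Real.log ((T - ‖c‖ ^ 2) / T)
        ≤ 1 + Real.log (mse T c w) := by gcongr
      _ ≤ ξ w μ := hξ_mse w μ ▸ Real.one_add_log_le_mul_sub_log (hε_min.trans_le hmse_ge) hμ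
  · rw [hξ_mse, mse_eq_mul_norm_sub_sq_add hT.ne', sub_self, norm_zero, ← inv_div]
    simpa using Real.inv_mul_sub_log_inv hε_min.ne'
  · have hlog2 : Real.log 2 ≠ 0 := by positivity
    rw [Real.logb, mul_div_cancel₀ _ hlog2, ← inv_div, Real.log_inv, ← sub_eq_add_neg]
end

section
/- Let N be an odd positive integer and u an integer with gcd(u, N) = 1. Define the Zadoff–Chu sequence x : ℤ → ℂ by x[n] = exp(−iπ u n(n+1)/N). Then x is N-periodic, |x[n]| = 1 for all n, and for every integer m with m ≢ 0 (mod N) the periodic autocorrelation vanishes: Σ_{n=0}^{N−1} x[n] · conj(x[n+m]) = 0. -/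
/-!
Shifting `n` by `N` changes `n (n + 1) / N` by `2 n + N + 1`, an even integer because `N` is odd,
so the phase changes by a multiple of `2π`. In the autocorrelation the quadratic terms cancel:
`x[n] conj x[n + m] = conj x[m] ζⁿ` with `ζ = ω ^ (u m)` for the primitive `N`-th root of unity
`ω = exp (2πi / N)`. Since `gcd (u, N) = 1` and `N ∤ m`, `ζ ≠ 1`, so the geometric sum vanishes.
-/

open Complex ComplexConjugate Finset

theorem geom_sum_eq_zero_of_pow_eq_one {R : Type*} [Ring R] [NoZeroDivisors R] {ζ : R} {N : ℕ}
    (hζN : ζ ^ N = 1) (hζ : ζ ≠ 1) : ∑ n ∈ range N, ζ ^ n = 0 :=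
  (mul_eq_zero.mp (by rw [geom_sum_mul, hζN, sub_self])).resolve_right (sub_ne_zero.mpr hζ)

theorem IsPrimitiveRoot.geom_sum_zpow_eq_zero {K : Type*} [Field K] {ω : K} {N : ℕ}
    (hω : IsPrimitiveRoot ω N) {k : ℤ} (hk : ¬ (N : ℤ) ∣ k) :
    ∑ n ∈ range N, (ω ^ k) ^ n = 0 := by
  refine geom_sum_eq_zero_of_pow_eq_one ?_ (mt (hω.zpow_eq_one_iff_dvd k).mp hk)
  rw [← zpow_natCast, ← zpow_mul, mul_comm, zpow_mul, hω.zpow_eq_one, one_zpow]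

noncomputable def zadoffChu (N : ℕ) (u n : ℤ) : ℂ :=
  exp (-(Real.pi * I * u * n * (n + 1)) / N)

section

variable (N : ℕ) (u : ℤ)

theorem zadoffChu_eq_exp_ofReal_mul_I (n : ℤ) :
    zadoffChu N u n = exp ((-(Real.pi * u * n * (n + 1) / N) : ℝ) * I) := by
  rw [zadoffChu]
  push_cast
  ring_nf

theorem norm_zadoffChu (n : ℤ) : ‖zadoffChu N u n‖ = 1 := by
  rw [zadoffChu_eq_exp_ofReal_mul_I, norm_exp_ofReal_mul_I]

theorem conj_zadoffChu (n : ℤ) :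
    conj (zadoffChu N u n) = exp (Real.pi * I * u * n * (n + 1) / N) := by
  rw [zadoffChu, ← exp_conj]
  simp [map_div₀, conj_I]

theorem zadoffChu_add_self (hN : Odd N) (n : ℤ) : zadoffChu N u (n + N) = zadoffChu N u n := by
  obtain ⟨k, rfl⟩ := hN
  have hN₀ : (2 * k + 1 : ℂ) ≠ 0 := by exact_mod_cast (2 * k).succ_ne_zero
  refine exp_eq_exp_iff_exists_int.mpr ⟨-(u * (n + k + 1)), ?_⟩
  push_cast
  field_simp
  ring

theorem zadoffChu_mul_conj_add (m : ℤ) (n : ℕ) :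
    zadoffChu N u n * conj (zadoffChu N u (n + m)) =
      conj (zadoffChu N u m) * (exp (2 * Real.pi * I / N) ^ (u * m)) ^ n := by
  rw [conj_zadoffChu, conj_zadoffChu, zadoffChu, ← exp_int_mul, ← exp_nat_mul, ← exp_add, ← exp_add]
  congr 1
  push_cast
  ring

end

theorem stmt_15_general (N : ℕ) (hodd : Odd N) (u : ℤ) (hu : Int.gcd u (N : ℤ) = 1)
    (x : ℤ → ℂ)
    (hx : ∀ n : ℤ, x n =
      Complex.exp (-(Real.pi * Complex.I * (u : ℂ) * (n : ℂ) * ((n : ℂ) + 1)) / (N : ℂ))) :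
    (∀ n : ℤ, x (n + N) = x n) ∧
    (∀ n : ℤ, ‖x n‖ = 1) ∧
    (∀ m : ℤ, ¬ ((N : ℤ) ∣ m) →
      ∑ n ∈ Finset.range N, x (n : ℤ) * (starRingEnd ℂ) (x ((n : ℤ) + m)) = 0) := by
  obtain rfl : x = zadoffChu N u := funext hx
  refine ⟨zadoffChu_add_self N u hodd, norm_zadoffChu N u, fun m hm => ?_⟩
  have hum : ¬ (N : ℤ) ∣ u * m :=
    mt (Int.isCoprime_iff_gcd_eq_one.mpr hu).symm.dvd_of_dvd_mul_left hm
  simp_rw [zadoffChu_mul_conj_add, ← mul_sum]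
  rw [(isPrimitiveRoot_exp N hodd.pos.ne').geom_sum_zpow_eq_zero hum, mul_zero]

/-- Perfect periodic autocorrelation of Zadoff–Chu sequences: for odd `N` and
`gcd(u, N) = 1`, the sequence `x[n] = exp(−iπ u n(n+1)/N)` is `N`-periodic, has
unit modulus, and `∑_{n=0}^{N−1} x[n] conj(x[n+m]) = 0` whenever `N ∤ m`. -/
theorem stmt_15 (N : ℕ) (hN : 0 < N) (hodd : Odd N) (u : ℤ) (hu : Int.gcd u (N : ℤ) = 1)
    (x : ℤ → ℂ)
    (hx : ∀ n : ℤ, x n =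
      Complex.exp (-(Real.pi * Complex.I * (u : ℂ) * (n : ℂ) * ((n : ℂ) + 1)) / (N : ℂ))) :
    (∀ n : ℤ, x (n + N) = x n) ∧
    (∀ n : ℤ, ‖x n‖ = 1) ∧
    (∀ m : ℤ, ¬ ((N : ℤ) ∣ m) →
      ∑ n ∈ Finset.range N, x (n : ℤ) * (starRingEnd ℂ) (x ((n : ℤ) + m)) = 0) :=
  stmt_15_general N hodd u hu x hx
end
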